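/- arXiv:2004.13509 — 8 statements merged into one kernel-verified Lean document; each statement's English description precedes it below -/
import Mathlib

section
/- For every real t, each of the three lines ℓ₁'(t), ℓ₂'(t), ℓ₃'(t) is tangent to the ellipse {(x, y) : (x − d)²/R² + y²/(R² − d²) = 1}; that is, each line meets this ellipse in exactly one point. (Hence the excentral sidelines of the poristic family all touch one fixed ellipse, with center (d, 0) = X₃, semiaxes R and √(R² − d²), and foci (0, 0) = X₄₀ and (2d, 0) = X₁.) -/
noncomputable section

/-- Inradius determined by Euler's relation: `r = (R² − d²)/(2R)`. -/
def rIn (R d : ℝ) : ℝ := (R ^ 2 - d ^ 2) / (2 * R)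

/-- `ω = √(R² − (d cos t + r)²)`. -/
def om (R d t : ℝ) : ℝ := Real.sqrt (R ^ 2 - (d * Real.cos t + rIn R d) ^ 2)

/-- Vertices `P₁(t), P₂(t), P₃(t)` of the poristic triangle
(circumcircle centered at `X₃ = (d,0)` with radius `R`,
incircle centered at `X₁ = (2d,0)` with radius `r`). -/
def Pv (R d t : ℝ) : Fin 3 → ℝ × ℝ :=
  ![(Real.cos t * (d * Real.cos t + rIn R d) - om R d t * Real.sin t + d,
     (d * Real.cos t + rIn R d) * Real.sin t + om R d t * Real.cos t),
    (Real.cos t * (d * Real.cos t + rIn R d) + om R d t * Real.sin t + d,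
     (d * Real.cos t + rIn R d) * Real.sin t - om R d t * Real.cos t),
    (R * (2 * d * R - (R ^ 2 + d ^ 2) * Real.cos t) /
       (R ^ 2 - 2 * d * R * Real.cos t + d ^ 2) + d,
     R * (d ^ 2 - R ^ 2) * Real.sin t /
       (R ^ 2 - 2 * d * R * Real.cos t + d ^ 2))]

/-- Coefficient of `x` in the excentral sideline `ℓᵢ'(t)`. -/
def lineA (R d t : ℝ) : Fin 3 → ℝ :=
  ![(d * Real.sin t - om R d t) * Real.sin t - rIn R d * Real.cos t,
    (d * Real.sin t + om R d t) * Real.sin t - rIn R d * Real.cos t,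
    R * Real.cos t - d]

/-- Coefficient of `y` in the excentral sideline `ℓᵢ'(t)`. -/
def lineB (R d t : ℝ) : Fin 3 → ℝ :=
  ![-((d * Real.cos t + rIn R d) * Real.sin t - om R d t * Real.cos t),
    -((d * Real.cos t + rIn R d) * Real.sin t + om R d t * Real.cos t),
    R * Real.sin t]

/-- Constant coefficient in the excentral sideline `ℓᵢ'(t)`. -/
def lineC (R d t : ℝ) : Fin 3 → ℝ :=
  ![R ^ 2 - d ^ 2, R ^ 2 - d ^ 2, -(2 * d * R * Real.cos t) + R ^ 2 + d ^ 2]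

/-- If a positively-weighted sum of two squares vanishes, both vanish. -/
lemma sq_zero_of_weighted (A2 B2 u v : ℝ) (hA : 0 < A2) (hB : 0 < B2)
    (h : A2 * u ^ 2 + B2 * v ^ 2 = 0) : u = 0 ∧ v = 0 := by
  have hu : u ^ 2 ≤ 0 := by nlinarith [sq_nonneg v]
  have hv : v ^ 2 ≤ 0 := by nlinarith [sq_nonneg u]
  constructor
  · exact pow_eq_zero_iff two_ne_zero |>.mp (le_antisymm hu (sq_nonneg u))
  · exact pow_eq_zero_iff two_ne_zero |>.mp (le_antisymm hv (sq_nonneg v))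

/-- General tangency lemma for a translated ellipse. -/
lemma tangent_unique (A2 B2 a b c dd : ℝ) (hA : 0 < A2) (hB : 0 < B2)
    (hc : c + a * dd ≠ 0) (h : A2 * a ^ 2 + B2 * b ^ 2 = (c + a * dd) ^ 2) :
    ∃! p : ℝ × ℝ,
      a * p.1 + b * p.2 + c = 0 ∧ (p.1 - dd) ^ 2 / A2 + p.2 ^ 2 / B2 = 1 := by
  set c' := c + a * dd with hc'
  refine ⟨(dd - A2 * a / c', -(B2 * b / c')), ⟨?_, ?_⟩, ?_⟩
  · field_simp
    linear_combination -h
  · have he : ((dd - A2 * a / c') - dd) ^ 2 / A2 + (-(B2 * b / c')) ^ 2 / B2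
        = (A2 * a ^ 2 + B2 * b ^ 2) / c' ^ 2 := by
      field_simp
      ring
    simp only [he, h]
    exact div_self (pow_ne_zero 2 hc)
  · rintro ⟨x, y⟩ ⟨h1, h2⟩
    simp only at h1 h2
    have h2' : B2 * (x - dd) ^ 2 + A2 * y ^ 2 = A2 * B2 := by
      field_simp at h2
      linarith [h2]
    have key : B2 * (c' * (x - dd) + A2 * a) ^ 2 + A2 * (c' * y + B2 * b) ^ 2 = 0 := by
      linear_combination c' ^ 2 * h2' + 2 * A2 * B2 * c' * h1 + A2 * B2 * h
    obtain ⟨hu, hv⟩ := sq_zero_of_weighted B2 A2 _ _ hB hA key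
    have hxv : x = dd - A2 * a / c' := by
      field_simp
      linear_combination hu
    have hyv : y = -(B2 * b / c') := by
      field_simp
      linear_combination hv
    exact Prod.ext hxv hyv

/-- each excentral sideline `ℓᵢ'(t)` meets the ellipse
`(x−d)²/R² + y²/(R²−d²) = 1` in exactly one point. -/
theorem excentral_sidelines_tangent_to_caustic
    (R d : ℝ) (hd : 0 < d) (hdR : d < R) (t : ℝ) (i : Fin 3) :
    ∃! p : ℝ × ℝ,
      lineA R d t i * p.1 + lineB R d t i * p.2 + lineC R d t i = 0 ∧
      (p.1 - d) ^ 2 / R ^ 2 + p.2 ^ 2 / (R ^ 2 - d ^ 2) = 1 := by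
  have hR : 0 < R := hd.trans hdR
  have hA : (0:ℝ) < R ^ 2 := by positivity
  have hB : (0:ℝ) < R ^ 2 - d ^ 2 := by nlinarith
  set s := Real.sin t with hs_def
  set c := Real.cos t with hc_def
  set r := rIn R d with hr_def
  set w := om R d t with hw_def
  have hr0 : 0 < r := by rw [hr_def, rIn]; positivity
  have hdr : d + r < R := by
    have h1 : r < R - d := by
      rw [hr_def, rIn, div_lt_iff₀ (by positivity)]
      nlinarith [sq_nonneg (R - d)]
    linarith
  have hc1 : c ≤ 1 := Real.cos_le_one t
  have hc1' : -1 ≤ c := Real.neg_one_le_cos t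
  have hrad : 0 < R ^ 2 - (d * c + r) ^ 2 := by
    have h1 : d * c + r < R := by nlinarith
    have h2 : -R < d * c + r := by nlinarith
    nlinarith [mul_pos (by linarith : (0:ℝ) < R - (d * c + r))
      (by linarith : (0:ℝ) < R + (d * c + r))]
  have hw2 : w ^ 2 = R ^ 2 - (d * c + r) ^ 2 := by
    rw [hw_def, om, ← hr_def, ← hc_def, Real.sq_sqrt hrad.le]
  have hs2 : s ^ 2 = 1 - c ^ 2 := by
    have := Real.sin_sq_add_cos_sq t
    rw [← hs_def, ← hc_def] at this; linarith
  fin_cases i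
  · simp only [lineA, lineB, lineC, Matrix.cons_val_zero, ← hs_def, ← hc_def, ← hr_def, ← hw_def]
    have key : R ^ 2 * ((d * s - w) * s - r * c) ^ 2
        + (R ^ 2 - d ^ 2) * (-((d * c + r) * s - w * c)) ^ 2
        = (R ^ 2 - d ^ 2 + ((d * s - w) * s - r * c) * d) ^ 2 := by
      linear_combination (-(c^2*d^2) + c^2*R^2 - s^2*d^2 + s^2*R^2) * hw2 +
        (d^4 - 2*R^2*d^2 + R^4 + 2*c*r*d^3 - 2*c*r*R^2*d + c^2*d^4 - c^2*R^2*d^2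
          + 2*s*w*d^3 - 2*s*w*R^2*d - s^2*d^4 + s^2*R^2*d^2) * hs2
    have hab : ((d * s - w) * s - r * c) ^ 2 + (-((d * c + r) * s - w * c)) ^ 2
        = (w - d * s) ^ 2 + r ^ 2 := by
      linear_combination (c^2 + s^2 - 1) * hw2 +
        (R^2 - 2*c*r*d - c^2*d^2 - 2*s*w*d + s^2*d^2) * hs2
    have hcne : R ^ 2 - d ^ 2 + ((d * s - w) * s - r * c) * d ≠ 0 := by
      intro h0
      rw [h0] at key
      have key' : R ^ 2 * ((d * s - w) * s - r * c) ^ 2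
          + (R ^ 2 - d ^ 2) * (-((d * c + r) * s - w * c)) ^ 2 = 0 := by
        rw [key]; ring
      obtain ⟨ha, hb⟩ := sq_zero_of_weighted _ _ _ _ hA hB key'
      rw [ha, hb] at hab
      nlinarith [sq_nonneg (w - d * s), mul_pos hr0 hr0]
    exact tangent_unique (R ^ 2) (R ^ 2 - d ^ 2) _ _ _ d hA hB hcne key
  · simp only [lineA, lineB, lineC, Matrix.cons_val_one, Matrix.head_cons, ← hs_def, ← hc_def,
      ← hr_def, ← hw_def]
    have key : R ^ 2 * ((d * s + w) * s - r * c) ^ 2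
        + (R ^ 2 - d ^ 2) * (-((d * c + r) * s + w * c)) ^ 2
        = (R ^ 2 - d ^ 2 + ((d * s + w) * s - r * c) * d) ^ 2 := by
      linear_combination (-(c^2*d^2) + c^2*R^2 - s^2*d^2 + s^2*R^2) * hw2 +
        (d^4 - 2*R^2*d^2 + R^4 + 2*c*r*d^3 - 2*c*r*R^2*d + c^2*d^4 - c^2*R^2*d^2
          - 2*s*w*d^3 + 2*s*w*R^2*d - s^2*d^4 + s^2*R^2*d^2) * hs2
    have hab : ((d * s + w) * s - r * c) ^ 2 + (-((d * c + r) * s + w * c)) ^ 2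
        = (w + d * s) ^ 2 + r ^ 2 := by
      linear_combination (c^2 + s^2 - 1) * hw2 +
        (R^2 - 2*c*r*d - c^2*d^2 + 2*s*w*d + s^2*d^2) * hs2
    have hcne : R ^ 2 - d ^ 2 + ((d * s + w) * s - r * c) * d ≠ 0 := by
      intro h0
      rw [h0] at key
      have key' : R ^ 2 * ((d * s + w) * s - r * c) ^ 2
          + (R ^ 2 - d ^ 2) * (-((d * c + r) * s + w * c)) ^ 2 = 0 := by
        rw [key]; ring
      obtain ⟨ha, hb⟩ := sq_zero_of_weighted _ _ _ _ hA hB key'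
      rw [ha, hb] at hab
      nlinarith [sq_nonneg (w + d * s), mul_pos hr0 hr0]
    exact tangent_unique (R ^ 2) (R ^ 2 - d ^ 2) _ _ _ d hA hB hcne key
  · simp only [lineA, lineB, lineC, Matrix.cons_val_two, Matrix.tail_cons, Matrix.head_cons,
      ← hs_def, ← hc_def]
    have key : R ^ 2 * (R * c - d) ^ 2 + (R ^ 2 - d ^ 2) * (R * s) ^ 2
        = (-(2 * d * R * c) + R ^ 2 + d ^ 2 + (R * c - d) * d) ^ 2 := by
      linear_combination (R^4 - R^2*d^2) * hs2
    have hcne : -(2 * d * R * c) + R ^ 2 + d ^ 2 + (R * c - d) * d ≠ 0 := by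
      have he : -(2 * d * R * c) + R ^ 2 + d ^ 2 + (R * c - d) * d = R * (R - d * c) := by ring
      rw [he]
      have : 0 < R - d * c := by nlinarith
      positivity
    exact tangent_unique (R ^ 2) (R ^ 2 - d ^ 2) _ _ _ d hA hB hcne key
end
end

section
/- For every real t, each of the three lines ℓ₁'(t), ℓ₂'(t), ℓ₃'(t) meets the zero set {(x, y) : I₃'(x, y, t) = 0} in exactly one point; that is, the conic I₃'(·, ·, t) = 0 is the inconic of the excentral triangle centered at X₄₀ = (0, 0). -/
noncomputable section

/-- The polynomial `I₃'(x, y, t)` defining the excentral `X₃`-centered inconic. -/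
def I3 (R d t x y : ℝ) : ℝ :=
  ((R ^ 2 - d ^ 2) ^ 2 - 8 * d * R ^ 2 * (R * Real.cos t - d) * Real.sin t ^ 2) * x ^ 2
  + ((R ^ 2 - d ^ 2) ^ 2
      - 4 * d * R * Real.cos t * ((R * Real.cos t - d) ^ 2 - R ^ 2 * Real.sin t ^ 2)) * y ^ 2
  + 4 * d * R * Real.sin t * (2 * R * Real.cos t - R - d) * (2 * R * Real.cos t + R - d)
      * (x * y)
  - (R ^ 2 - d ^ 2) ^ 2 * (R ^ 2 + d ^ 2 - 2 * d * R * Real.cos t)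

/-!
Each sideline `ℓᵢ'` is tangent to the conic `a x² + b y² + g xy = K` defined by `I₃'`, by the
dual-conic criterion `C² (4ab − g²) = 4K (bA² − gAB + aB²)` for a line `Ax + By + C = 0`. Both
sides factor through `E = R² + d² − 2dR cos t`: one has `4ab − g² = 4KE`, and the dual form of
the coefficient vector of each sideline equals `C² E`. These are polynomial identities in
`cos t`, `sin t`, `r` and `ω` modulo `sin² t + cos² t = 1`, `2Rr = R² − d²` and
`ω² = R² − (d cos t + r)²`.
-/

theorem existsUnique_linear_system {A B u v : ℝ} (h : A ^ 2 + B ^ 2 ≠ 0) :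
    ∃! p : ℝ × ℝ, A * p.1 + B * p.2 = u ∧ B * p.1 - A * p.2 = v := by
  refine ⟨((A * u + B * v) / (A ^ 2 + B ^ 2), (B * u - A * v) / (A ^ 2 + B ^ 2)),
    ⟨by field_simp; ring, by field_simp; ring⟩, ?_⟩
  rintro ⟨x, y⟩ ⟨rfl, rfl⟩
  ext <;> field_simp <;> ring

/-- The hypothesis `hT` says that `(A : B : C)` lies on the dual conic, whose matrix is the
adjugate of that of the conic. -/
theorem existsUnique_line_conic_of_tangent {a b g K A B C : ℝ}
    (hN : b * A ^ 2 - g * A * B + a * B ^ 2 ≠ 0)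
    (hT : C ^ 2 * (4 * a * b - g ^ 2) = 4 * K * (b * A ^ 2 - g * A * B + a * B ^ 2)) :
    ∃! p : ℝ × ℝ, A * p.1 + B * p.2 + C = 0 ∧
      a * p.1 ^ 2 + b * p.2 ^ 2 + g * (p.1 * p.2) - K = 0 := by
  set N := b * A ^ 2 - g * A * B + a * B ^ 2
  set G := 2 * A * B * (a - b) + (B ^ 2 - A ^ 2) * g
  have hAB : A ^ 2 + B ^ 2 ≠ 0 := by
    intro h
    obtain ⟨rfl, rfl⟩ : A = 0 ∧ B = 0 := ⟨by nlinarith, by nlinarith⟩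
    simp [N] at hN
  have hsq : ∀ x y, A * x + B * y + C = 0 →
      4 * N * (A ^ 2 + B ^ 2) ^ 2 * (a * x ^ 2 + b * y ^ 2 + g * (x * y) - K)
        = (2 * N * (B * x - A * y) - C * G) ^ 2 := by
    intro x y hl
    linear_combination
      4 * N * (a * A ^ 2 + g * A * B + b * B ^ 2) * (A * x + B * y - C) * hl
        + 4 * N * G * (B * x - A * y) * hl + (A ^ 2 + B ^ 2) ^ 2 * hT
  refine (existsUnique_congr fun p ↦ ?_).mpr
    (existsUnique_linear_system (u := -C) (v := C * G / (2 * N)) hAB)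
  constructor
  · rintro ⟨hl, hq⟩
    have := hsq _ _ hl
    rw [hq, mul_zero, eq_comm, sq_eq_zero_iff, sub_eq_zero] at this
    exact ⟨by linear_combination hl, by field_simp; linear_combination this⟩
  · rintro ⟨hl, hv⟩
    have hl : A * p.1 + B * p.2 + C = 0 := by linear_combination hl
    refine ⟨hl, ?_⟩
    have := hsq _ _ hl
    rw [hv, mul_div_cancel₀ _ (mul_ne_zero two_ne_zero hN), sub_self, zero_pow two_ne_zero] at this
    simpa [hN, hAB] using this

open Real

section Poristic

variable {R d : ℝ}

theorem two_mul_mul_rIn (hR : R ≠ 0) : 2 * R * rIn R d = R ^ 2 - d ^ 2 := by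
  unfold rIn
  field_simp

theorem om_sq (hd : 0 < d) (hdR : d < R) (t : ℝ) :
    om R d t ^ 2 = R ^ 2 - (d * cos t + rIn R d) ^ 2 := by
  have hR : 0 < R := hd.trans hdR
  have hr := two_mul_mul_rIn (d := d) hR.ne'
  have hc₁ := neg_one_le_cos t
  have hc₂ := cos_le_one t
  have hr_pos : 0 < rIn R d := by nlinarith
  have hdr : d + rIn R d < R := by nlinarith [mul_pos (sub_pos.2 hdR) (sub_pos.2 hdR)]
  have hlt : d * cos t + rIn R d < R := by nlinarith
  have hgt : -R < d * cos t + rIn R d := by nlinarith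
  exact sq_sqrt (by nlinarith)

theorem sq_add_sq_sub_mul_cos_pos (hd : 0 < d) (hdR : d < R) (t : ℝ) :
    0 < R ^ 2 + d ^ 2 - 2 * d * R * cos t := by
  have : 0 ≤ d * R * (1 - cos t) :=
    mul_nonneg (mul_pos hd (hd.trans hdR)).le (sub_nonneg.2 (cos_le_one t))
  nlinarith [mul_pos (sub_pos.2 hdR) (sub_pos.2 hdR)]

variable (R d) in
theorem I3_discrim (t : ℝ) :
    4 * ((R ^ 2 - d ^ 2) ^ 2 - 8 * d * R ^ 2 * (R * cos t - d) * sin t ^ 2)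
        * ((R ^ 2 - d ^ 2) ^ 2 - 4 * d * R * cos t * ((R * cos t - d) ^ 2 - R ^ 2 * sin t ^ 2))
      - (4 * d * R * sin t * (2 * R * cos t - R - d) * (2 * R * cos t + R - d)) ^ 2
      = 4 * ((R ^ 2 - d ^ 2) ^ 2 * (R ^ 2 + d ^ 2 - 2 * d * R * cos t))
        * (R ^ 2 + d ^ 2 - 2 * d * R * cos t) := by
  grind [sin_sq_add_cos_sq]

theorem I3_dual_line_eq (hd : 0 < d) (hdR : d < R) (t : ℝ) (i : Fin 3) :
    ((R ^ 2 - d ^ 2) ^ 2 - 4 * d * R * cos t * ((R * cos t - d) ^ 2 - R ^ 2 * sin t ^ 2))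
          * lineA R d t i ^ 2
        - 4 * d * R * sin t * (2 * R * cos t - R - d) * (2 * R * cos t + R - d)
          * lineA R d t i * lineB R d t i
        + ((R ^ 2 - d ^ 2) ^ 2 - 8 * d * R ^ 2 * (R * cos t - d) * sin t ^ 2)
          * lineB R d t i ^ 2
      = lineC R d t i ^ 2 * (R ^ 2 + d ^ 2 - 2 * d * R * cos t) := by
  have hs := sin_sq_add_cos_sq t
  have hr := two_mul_mul_rIn (d := d) (hd.trans hdR).ne'
  have hω := om_sq hd hdR t
  fin_cases i <;>
    simp only [lineA, lineB, lineC, Fin.zero_eta, Fin.mk_one, Fin.reduceFinMk, Fin.isValue,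
      Matrix.cons_val_zero, Matrix.cons_val_one, Matrix.cons_val] <;>
    grind

theorem lineC_ne_zero (hd : 0 < d) (hdR : d < R) (t : ℝ) (i : Fin 3) : lineC R d t i ≠ 0 := by
  have := sq_add_sq_sub_mul_cos_pos hd hdR t
  fin_cases i <;>
    simp only [lineC, Fin.zero_eta, Fin.mk_one, Fin.reduceFinMk, Fin.isValue,
      Matrix.cons_val_zero, Matrix.cons_val_one, Matrix.cons_val] <;>
    nlinarith

end Poristic

/-- each excentral sideline `ℓᵢ'(t)` meets the zero set of
`I₃'(·,·,t)` in exactly one point, i.e. `I₃'(·,·,t) = 0` is the inconic of the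
excentral triangle centered at `X₄₀ = (0,0)`. -/
theorem excentral_sidelines_tangent_to_I3
    (R d : ℝ) (hd : 0 < d) (hdR : d < R) (t : ℝ) (i : Fin 3) :
    ∃! p : ℝ × ℝ,
      lineA R d t i * p.1 + lineB R d t i * p.2 + lineC R d t i = 0 ∧
      I3 R d t p.1 p.2 = 0 := by
  have hdual := I3_dual_line_eq hd hdR t i
  apply existsUnique_line_conic_of_tangent
  · rw [hdual]
    exact mul_ne_zero (pow_ne_zero 2 (lineC_ne_zero hd hdR t i))
      (sq_add_sq_sub_mul_cos_pos hd hdR t).ne'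
  · rw [hdual]
    linear_combination lineC R d t i ^ 2 * I3_discrim R d t
end
end

section
/- For every real t, the perimeter of the poristic triangle satisfies ‖P₁(t) − P₂(t)‖ + ‖P₂(t) − P₃(t)‖ + ‖P₃(t) − P₁(t)‖ = (3R² − 4dR cos t + d²)·√(3R² + 2dR cos t − d²)/(R·√(R² − 2dR cos t + d²)), where ‖·‖ is the Euclidean norm on ℝ². -/
noncomputable section

/-- Euclidean norm on `ℝ²`. -/
def ptNorm (p : ℝ × ℝ) : ℝ := Real.sqrt (p.1 ^ 2 + p.2 ^ 2)

/-!
Write `Q = arcMidDistSq R d t` and `E = arcAntiDistSq R d t = 4R² − Q`. The side `P₁P₂` is the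
chord of the circumcircle perpendicular to `(cos t, sin t)` at distance `d cos t + r` from `X₃`, so
its half-length `ω` satisfies `4R²ω² = QE`. Expanding `|P₃ − P₁|²` modulo `sin² t + cos² t = 1` and
this relation gives `|P₃ − P₁| = (√E (R − d cos t) + d sin t √Q)/√Q`; the numerator is nonnegative
since `E (R − d cos t)² − d² sin² t · Q = (R² − d²)(2Q + R² − d²)`. Reflecting in the `x`-axis maps
the triangle at `−t` to the one at `t` with `P₁` and `P₂` swapped, so `|P₂ − P₃|` is the same
expression at `−t`. In the sum the terms `± d sin t √Q` cancel, and
`2Q + R² − d² = 3R² − 4dR cos t + d²`.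
-/

open Real

/-- `|M − X₁|²` for `M = X₃ + R (cos t, sin t)`, the midpoint of the arc `P₁P₂`; by the trillium
theorem it is also `|M − P₁|²`. -/
def arcMidDistSq (R d t : ℝ) : ℝ := R ^ 2 - 2 * d * R * cos t + d ^ 2

/-- `4R² − arcMidDistSq R d t`, i.e. `|M' − P₁|²` for the antipode `M'` of `M` (Thales). -/
def arcAntiDistSq (R d t : ℝ) : ℝ := 3 * R ^ 2 + 2 * d * R * cos t - d ^ 2

theorem ptNorm_eq_of_sq {p : ℝ × ℝ} {a : ℝ} (ha : 0 ≤ a) (h : p.1 ^ 2 + p.2 ^ 2 = a ^ 2) :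
    ptNorm p = a := by
  rw [ptNorm, h, sqrt_sq ha]

section

variable (R d t : ℝ)

theorem arcMidDistSq_eq : arcMidDistSq R d t = (R - d * cos t) ^ 2 + (d * sin t) ^ 2 := by
  rw [arcMidDistSq]
  linear_combination -d ^ 2 * sin_sq_add_cos_sq t

theorem ptNorm_Pv_zero_sub_one : ptNorm (Pv R d t 0 - Pv R d t 1) = 2 * om R d t := by
  refine ptNorm_eq_of_sq (by unfold om; positivity) ?_
  simp only [Pv, Fin.isValue, Matrix.cons_val_zero, Matrix.cons_val_one, Prod.mk_sub_mk]
  linear_combination (2 * om R d t) ^ 2 * sin_sq_add_cos_sq t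

theorem ptNorm_Pv_one_sub_two_eq_neg :
    ptNorm (Pv R d t 1 - Pv R d t 2) = ptNorm (Pv R d (-t) 2 - Pv R d (-t) 0) := by
  simp only [ptNorm, Pv, om, Fin.isValue, Matrix.cons_val_zero, Matrix.cons_val_one,
    Matrix.cons_val, Prod.mk_sub_mk, cos_neg, sin_neg]
  congr 1
  ring

variable {R d}

theorem sub_mul_cos_pos (h : |d| < R) : 0 < R - d * cos t := by
  have : d * cos t ≤ |d| :=
    calc d * cos t ≤ |d| * |cos t| := abs_mul d (cos t) ▸ le_abs_self _
      _ ≤ |d| := mul_le_of_le_one_right (abs_nonneg d) (abs_cos_le_one t)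
  linarith

theorem arcMidDistSq_pos (h : |d| < R) : 0 < arcMidDistSq R d t := by
  rw [arcMidDistSq_eq]
  have := sub_mul_cos_pos t h
  positivity

theorem arcAntiDistSq_pos (h : |d| < R) : 0 < arcAntiDistSq R d t := by
  have hsub := sub_mul_cos_pos t h
  have hadd : 0 < R + d * cos t := by simpa [cos_add_pi] using sub_mul_cos_pos (t + π) h
  have hd := abs_lt.mp h
  rw [arcAntiDistSq]
  nlinarith

theorem two_mul_mul_om (hR : 0 < R) :
    2 * R * om R d t = √(arcMidDistSq R d t) * √(arcAntiDistSq R d t) := by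
  have hQ : 0 ≤ arcMidDistSq R d t := by rw [arcMidDistSq_eq]; positivity
  have hrad : R ^ 2 - (d * cos t + rIn R d) ^ 2
      = arcMidDistSq R d t * arcAntiDistSq R d t / (2 * R) ^ 2 := by
    rw [rIn, arcMidDistSq, arcAntiDistSq]
    field_simp
    ring
  rw [om, hrad, sqrt_div' _ (sq_nonneg _), sqrt_sq (by positivity), sqrt_mul hQ]
  field_simp

theorem abs_mul_sin_mul_sqrt_le (h : |d| < R) :
    |d * sin t * √(arcMidDistSq R d t)| ≤ √(arcAntiDistSq R d t) * (R - d * cos t) := by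
  have hRd : 0 < R ^ 2 - d ^ 2 := by
    have := abs_lt.mp h
    nlinarith
  have hQ := arcMidDistSq_pos t h
  have hE := arcAntiDistSq_pos t h
  have hfactor : arcAntiDistSq R d t * (R - d * cos t) ^ 2 - (d * sin t) ^ 2 * arcMidDistSq R d t
      = (R ^ 2 - d ^ 2) * (2 * arcMidDistSq R d t + (R ^ 2 - d ^ 2)) := by
    rw [arcAntiDistSq, arcMidDistSq]
    linear_combination (-(d ^ 2 * (R ^ 2 - 2 * d * R * cos t + d ^ 2))) * sin_sq_add_cos_sq t
  refine abs_le_of_sq_le_sq ?_ (mul_nonneg (sqrt_nonneg _) (sub_mul_cos_pos t h).le)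
  simp only [mul_pow, sq_sqrt hQ.le, sq_sqrt hE.le]
  linarith [mul_pos hRd (show 0 < 2 * arcMidDistSq R d t + (R ^ 2 - d ^ 2) by linarith)]

theorem sq_fst_Pv_two_sub_zero_add_sq_snd (h : |d| < R) :
    (Pv R d t 2 - Pv R d t 0).1 ^ 2 + (Pv R d t 2 - Pv R d t 0).2 ^ 2
      = (arcAntiDistSq R d t * (R - d * cos t) ^ 2
          + 2 * d * sin t * (R - d * cos t) * (2 * R * om R d t)
          + (d * sin t) ^ 2 * arcMidDistSq R d t) / arcMidDistSq R d t := by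
  have hR : 0 < R := (abs_nonneg d).trans_lt h
  have hQ := (arcMidDistSq_pos t h).ne'
  have hω : (2 * R * om R d t) ^ 2 = arcMidDistSq R d t * arcAntiDistSq R d t := by
    rw [two_mul_mul_om t hR, mul_pow, sq_sqrt (arcMidDistSq_pos t h).le,
      sq_sqrt (arcAntiDistSq_pos t h).le]
  have hsc := sin_sq_add_cos_sq t
  simp only [Pv, rIn, Matrix.cons_val_zero, Matrix.cons_val_two, Matrix.tail_cons,
    Matrix.head_cons, Prod.fst_sub, Prod.snd_sub]
  unfold arcMidDistSq at hQ hω ⊢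
  unfold arcAntiDistSq at hω ⊢
  field_simp
  field_simp at hω
  grind

theorem ptNorm_Pv_two_sub_zero (h : |d| < R) :
    ptNorm (Pv R d t 2 - Pv R d t 0) =
      (√(arcAntiDistSq R d t) * (R - d * cos t) + d * sin t * √(arcMidDistSq R d t))
        / √(arcMidDistSq R d t) := by
  have hR : 0 < R := (abs_nonneg d).trans_lt h
  have hQ := arcMidDistSq_pos t h
  refine ptNorm_eq_of_sq (div_nonneg ?_ (sqrt_nonneg _)) ?_
  · linarith [neg_abs_le (d * sin t * √(arcMidDistSq R d t)), abs_mul_sin_mul_sqrt_le t h]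
  rw [sq_fst_Pv_two_sub_zero_add_sq_snd t h, div_pow, sq_sqrt hQ.le, two_mul_mul_om t hR]
  congr 1
  linear_combination -(R - d * cos t) ^ 2 * sq_sqrt (arcAntiDistSq_pos t h).le
    - (d * sin t) ^ 2 * sq_sqrt hQ.le

theorem ptNorm_Pv_one_sub_two (h : |d| < R) :
    ptNorm (Pv R d t 1 - Pv R d t 2) =
      (√(arcAntiDistSq R d t) * (R - d * cos t) - d * sin t * √(arcMidDistSq R d t))
        / √(arcMidDistSq R d t) := by
  rw [ptNorm_Pv_one_sub_two_eq_neg, ptNorm_Pv_two_sub_zero (-t) h]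
  simp only [arcMidDistSq, arcAntiDistSq, cos_neg, sin_neg]
  ring

end

/-- perimeter of the poristic triangle. -/
theorem poristic_perimeter (R d : ℝ) (hd : 0 < d) (hdR : d < R) (t : ℝ) :
    ptNorm (Pv R d t 0 - Pv R d t 1) + ptNorm (Pv R d t 1 - Pv R d t 2)
      + ptNorm (Pv R d t 2 - Pv R d t 0)
      = (3 * R ^ 2 - 4 * d * R * Real.cos t + d ^ 2)
          * Real.sqrt (3 * R ^ 2 + 2 * d * R * Real.cos t - d ^ 2)
          / (R * Real.sqrt (R ^ 2 - 2 * d * R * Real.cos t + d ^ 2)) := by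
  change _ = _ * √(arcAntiDistSq R d t) / (R * √(arcMidDistSq R d t))
  have h : |d| < R := abs_lt.mpr ⟨by linarith, hdR⟩
  have hR : 0 < R := hd.trans hdR
  have hS : √(arcMidDistSq R d t) ≠ 0 := (sqrt_pos.mpr (arcMidDistSq_pos t h)).ne'
  have hS2 : √(arcMidDistSq R d t) ^ 2 = R ^ 2 - 2 * d * R * cos t + d ^ 2 :=
    sq_sqrt (arcMidDistSq_pos t h).le
  have hω : om R d t = √(arcMidDistSq R d t) * √(arcAntiDistSq R d t) / (2 * R) := by
    rw [← two_mul_mul_om t hR]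
    field_simp
  rw [ptNorm_Pv_zero_sub_one, ptNorm_Pv_one_sub_two t h, ptNorm_Pv_two_sub_zero t h, hω]
  field_simp
  linear_combination √(arcAntiDistSq R d t) * hS2
end
end

section
/- Let a₁, b₁, c₁, a₂, b₂, c₂, a₃, b₃, c₃ be real numbers and set δᵢⱼ = aᵢbⱼ − aⱼbᵢ; assume δ₁₂, δ₁₃, δ₂₃ are all nonzero. Define A = a₂a₃c₁²δ₂₃ − a₁a₃c₂²δ₁₃ + a₁a₂c₃²δ₁₂; B = (1/2)·((a₂b₃ + a₃b₂)c₁²δ₂₃ − (a₁b₃ + a₃b₁)c₂²δ₁₃ + (a₁b₂ + a₂b₁)c₃²δ₁₂); C = b₂b₃c₁²δ₂₃ − b₁b₃c₂²δ₁₃ + b₁b₂c₃²δ₁₂; and D = (1/(4δ₁₂δ₁₃δ₂₃))·(δ₂₃c₁ + δ₁₃c₂ − δ₁₂c₃)(δ₂₃c₁ − δ₁₃c₂ − δ₁₂c₃)(δ₂₃c₁ − δ₁₃c₂ + δ₁₂c₃)(δ₂₃c₁ + δ₁₃c₂ + δ₁₂c₃). Then for each i ∈ {1, 2, 3} the tangency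 condition (AC − B²)·cᵢ² + (A·bᵢ² − 2B·aᵢbᵢ + C·aᵢ²)·D = 0 holds; i.e., each line aᵢx + bᵢy + cᵢ = 0 is tangent to the central conic Ax² + 2Bxy + Cy² + D = 0. -/
/-!
Write `Lᵢ(u, v) = aᵢv − bᵢu`. The form `A v² − 2B uv + C u²` is the combination
`c₁²δ₂₃ L₂L₃ − c₂²δ₁₃ L₁L₃ + c₃²δ₁₂ L₁L₂` of line pairs, so at `(aᵢ, bᵢ)`, where `Lᵢ` vanishes,
it equals `δ₁₂δ₁₃δ₂₃ cᵢ²`. For such a combination `4(AC − B²)` is a symmetric quadratic in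
`c₁²δ₂₃², c₂²δ₁₃², c₃²δ₁₂²`, and Heron's factorization turns it into `−4δ₁₂δ₁₃δ₂₃ D`.
Each tangency condition therefore reads `cᵢ²(AC − B² + δ₁₂δ₁₃δ₂₃ D) = 0`.
-/

section Pencil

variable {R : Type*} [CommRing R] {a₁ b₁ a₂ b₂ a₃ b₃ w₁ w₂ w₃ A B C : R}

theorem pencil_quadForm_eq
    (hA : A = a₂ * a₃ * w₁ - a₁ * a₃ * w₂ + a₁ * a₂ * w₃)
    (hB : 2 * B = (a₂ * b₃ + a₃ * b₂) * w₁ - (a₁ * b₃ + a₃ * b₁) * w₂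
      + (a₁ * b₂ + a₂ * b₁) * w₃)
    (hC : C = b₂ * b₃ * w₁ - b₁ * b₃ * w₂ + b₁ * b₂ * w₃) (u v : R) :
    A * v ^ 2 - 2 * B * u * v + C * u ^ 2 =
      w₁ * (a₂ * v - b₂ * u) * (a₃ * v - b₃ * u) - w₂ * (a₁ * v - b₁ * u) * (a₃ * v - b₃ * u)
        + w₃ * (a₁ * v - b₁ * u) * (a₂ * v - b₂ * u) := by
  rw [hA, hB, hC]
  ring

theorem pencil_four_mul_det
    (hA : A = a₂ * a₃ * w₁ - a₁ * a₃ * w₂ + a₁ * a₂ * w₃)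
    (hB : 2 * B = (a₂ * b₃ + a₃ * b₂) * w₁ - (a₁ * b₃ + a₃ * b₁) * w₂
      + (a₁ * b₂ + a₂ * b₁) * w₃)
    (hC : C = b₂ * b₃ * w₁ - b₁ * b₃ * w₂ + b₁ * b₂ * w₃) :
    4 * (A * C - B ^ 2) =
      2 * (w₁ * (a₂ * b₃ - a₃ * b₂)) * (w₂ * (a₁ * b₃ - a₃ * b₁))
        + 2 * (w₂ * (a₁ * b₃ - a₃ * b₁)) * (w₃ * (a₁ * b₂ - a₂ * b₁))
        + 2 * (w₃ * (a₁ * b₂ - a₂ * b₁)) * (w₁ * (a₂ * b₃ - a₃ * b₂))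
        - (w₁ * (a₂ * b₃ - a₃ * b₂)) ^ 2 - (w₂ * (a₁ * b₃ - a₃ * b₁)) ^ 2
        - (w₃ * (a₁ * b₂ - a₂ * b₁)) ^ 2 := by
  rw [show 4 * (A * C - B ^ 2) = 4 * A * C - (2 * B) ^ 2 by ring, hA, hB, hC]
  ring

end Pencil

theorem tangency_of_quadForm_eq_of_det_eq {R : Type*} [CommRing R] {A B C D Δ a b c : R}
    (hQ : A * b ^ 2 - 2 * B * a * b + C * a ^ 2 = Δ * c ^ 2) (hdet : A * C - B ^ 2 = -Δ * D) :
    (A * C - B ^ 2) * c ^ 2 + (A * b ^ 2 - 2 * B * a * b + C * a ^ 2) * D = 0 := by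
  rw [hQ, hdet]
  ring

/-- the central conic `Ax² + 2Bxy + Cy² + D = 0` with coefficients
built from the three lines `aᵢx + bᵢy + cᵢ = 0` satisfies, for each `i`, the
tangency (discriminant) condition `(AC − B²)cᵢ² + (Abᵢ² − 2Baᵢbᵢ + Caᵢ²)D = 0`. -/
theorem inconic_tangency
    (a₁ b₁ c₁ a₂ b₂ c₂ a₃ b₃ c₃ : ℝ)
    (δ₁₂ δ₁₃ δ₂₃ : ℝ)
    (h12 : δ₁₂ = a₁ * b₂ - a₂ * b₁) (h13 : δ₁₃ = a₁ * b₃ - a₃ * b₁)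
    (h23 : δ₂₃ = a₂ * b₃ - a₃ * b₂)
    (h12ne : δ₁₂ ≠ 0) (h13ne : δ₁₃ ≠ 0) (h23ne : δ₂₃ ≠ 0)
    (A B C D : ℝ)
    (hA : A = a₂ * a₃ * c₁ ^ 2 * δ₂₃ - a₁ * a₃ * c₂ ^ 2 * δ₁₃ + a₁ * a₂ * c₃ ^ 2 * δ₁₂)
    (hB : B = (1 / 2) * ((a₂ * b₃ + a₃ * b₂) * c₁ ^ 2 * δ₂₃
        - (a₁ * b₃ + a₃ * b₁) * c₂ ^ 2 * δ₁₃ + (a₁ * b₂ + a₂ * b₁) * c₃ ^ 2 * δ₁₂))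
    (hC : C = b₂ * b₃ * c₁ ^ 2 * δ₂₃ - b₁ * b₃ * c₂ ^ 2 * δ₁₃ + b₁ * b₂ * c₃ ^ 2 * δ₁₂)
    (hD : D = (1 / (4 * δ₁₂ * δ₁₃ * δ₂₃))
        * (δ₂₃ * c₁ + δ₁₃ * c₂ - δ₁₂ * c₃) * (δ₂₃ * c₁ - δ₁₃ * c₂ - δ₁₂ * c₃)
        * (δ₂₃ * c₁ - δ₁₃ * c₂ + δ₁₂ * c₃) * (δ₂₃ * c₁ + δ₁₃ * c₂ + δ₁₂ * c₃)) :
    ((A * C - B ^ 2) * c₁ ^ 2 + (A * b₁ ^ 2 - 2 * B * a₁ * b₁ + C * a₁ ^ 2) * D = 0) ∧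
    ((A * C - B ^ 2) * c₂ ^ 2 + (A * b₂ ^ 2 - 2 * B * a₂ * b₂ + C * a₂ ^ 2) * D = 0) ∧
    ((A * C - B ^ 2) * c₃ ^ 2 + (A * b₃ ^ 2 - 2 * B * a₃ * b₃ + C * a₃ ^ 2) * D = 0) := by
  have hA' : A = a₂ * a₃ * (c₁ ^ 2 * δ₂₃) - a₁ * a₃ * (c₂ ^ 2 * δ₁₃)
      + a₁ * a₂ * (c₃ ^ 2 * δ₁₂) := by rw [hA]; ring
  have hB' : 2 * B = (a₂ * b₃ + a₃ * b₂) * (c₁ ^ 2 * δ₂₃) - (a₁ * b₃ + a₃ * b₁) * (c₂ ^ 2 * δ₁₃)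
      + (a₁ * b₂ + a₂ * b₁) * (c₃ ^ 2 * δ₁₂) := by rw [hB]; ring
  have hC' : C = b₂ * b₃ * (c₁ ^ 2 * δ₂₃) - b₁ * b₃ * (c₂ ^ 2 * δ₁₃)
      + b₁ * b₂ * (c₃ ^ 2 * δ₁₂) := by rw [hC]; ring
  have hQ := pencil_quadForm_eq hA' hB' hC'
  have hdet : A * C - B ^ 2 = -(δ₁₂ * δ₁₃ * δ₂₃) * D := by
    have h4 := pencil_four_mul_det hA' hB' hC'
    rw [← h12, ← h13, ← h23] at h4
    set x := δ₂₃ * c₁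
    set y := δ₁₃ * c₂
    set z := δ₁₂ * c₃
    calc A * C - B ^ 2 = (2 * x ^ 2 * y ^ 2 + 2 * y ^ 2 * z ^ 2 + 2 * z ^ 2 * x ^ 2
          - x ^ 4 - y ^ 4 - z ^ 4) / 4 := by linear_combination h4 / 4
      _ = -((x + y - z) * (x - y - z) * (x - y + z) * (x + y + z)) / 4 := by ring
      _ = -(δ₁₂ * δ₁₃ * δ₂₃) * D := by rw [hD]; field_simp
  refine ⟨tangency_of_quadForm_eq_of_det_eq ?_ hdet, tangency_of_quadForm_eq_of_det_eq ?_ hdet,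
    tangency_of_quadForm_eq_of_det_eq ?_ hdet⟩
  · rw [hQ, h12, h13]; ring
  · rw [hQ, h12, h23]; ring
  · rw [hQ, h13, h23]; ring
end

section
/- Let a > b > 0, set c² = a² − b², δ = √(a⁴ − a²b² + b⁴), and ρ = 2(δ − b²)(a² − δ)/c⁴ (the invariant inradius-to-circumradius ratio of the 3-periodic family in the elliptic billiard with semiaxes a, b). Then a²/b² = (ρ² + 2(ρ + 1)√(1 − 2ρ) + 2)/(ρ(ρ + 4)). -/
/-- the squared aspect ratio `a²/b²` of the elliptic billiard with
invariant inradius-to-circumradius ratio `ρ` of its 3-periodic family. -/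
theorem billiard_aspect_ratio_from_rho (a b c2 δ ρ : ℝ)
    (hb : 0 < b) (hab : b < a)
    (hc2 : c2 = a ^ 2 - b ^ 2)
    (hδ : δ = Real.sqrt (a ^ 4 - a ^ 2 * b ^ 2 + b ^ 4))
    (hρ : ρ = 2 * (δ - b ^ 2) * (a ^ 2 - δ) / c2 ^ 2) :
    a ^ 2 / b ^ 2 = (ρ ^ 2 + 2 * (ρ + 1) * Real.sqrt (1 - 2 * ρ) + 2) / (ρ * (ρ + 4)) := by
  have ha : 0 < a := hb.trans hab
  have hc2pos : 0 < c2 := by rw [hc2]; nlinarith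
  have hcne : (a ^ 2 - b ^ 2) ≠ 0 := by rw [hc2] at hc2pos; linarith
  have hcpos : (0:ℝ) < a ^ 2 - b ^ 2 := by nlinarith
  have hEpos : 0 < a ^ 4 - a ^ 2 * b ^ 2 + b ^ 4 := by nlinarith
  have hE : δ ^ 2 = a ^ 4 - a ^ 2 * b ^ 2 + b ^ 4 := by
    rw [hδ, Real.sq_sqrt hEpos.le]
  have hδpos : 0 < δ := by rw [hδ]; exact Real.sqrt_pos.mpr hEpos
  have hδlt : δ < a ^ 2 := by
    rw [hδ, Real.sqrt_lt' (by positivity)]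
    nlinarith [mul_pos hcpos (pow_pos hb 2)]
  have hδgt : b ^ 2 < δ := by
    rw [hδ, Real.lt_sqrt (by positivity)]
    nlinarith [mul_pos hcpos (pow_pos hb 2)]
  have hδbig : a ^ 2 + b ^ 2 ≤ 2 * δ := by
    have h2 : (a ^ 2 + b ^ 2) / 2 ≤ δ := by
      rw [hδ, Real.le_sqrt (by positivity) hEpos.le]
      nlinarith [sq_nonneg (a ^ 2 - b ^ 2)]
    linarith
  have hNpos : 0 < 2 * (δ - b ^ 2) * (a ^ 2 - δ) := by nlinarith
  have hρpos : 0 < ρ := by rw [hρ]; exact div_pos hNpos (pow_pos hc2pos 2)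
  have hρc : ρ * (a ^ 2 - b ^ 2) ^ 2 = 2 * (δ - b ^ 2) * (a ^ 2 - δ) := by
    rw [hρ, hc2]; field_simp
  have hs : Real.sqrt (1 - 2 * ρ) = (2 * δ - a ^ 2 - b ^ 2) / (a ^ 2 - b ^ 2) := by
    have h1 : 1 - 2 * ρ = ((2 * δ - a ^ 2 - b ^ 2) / (a ^ 2 - b ^ 2)) ^ 2 := by
      rw [div_pow, eq_div_iff (by positivity)]
      linear_combination -2 * hρc
    rw [h1, Real.sqrt_sq (by apply div_nonneg <;> linarith)]
  rw [hs]
  set u : ℝ := (2 * δ - a ^ 2 - b ^ 2) / (a ^ 2 - b ^ 2) with hu_def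
  have hu : u * (a ^ 2 - b ^ 2) = 2 * δ - a ^ 2 - b ^ 2 := by
    rw [hu_def]; field_simp
  have hu0 : 0 ≤ u := by rw [hu_def]; apply div_nonneg <;> linarith
  rw [div_eq_div_iff (by positivity) (by positivity)]
  apply mul_left_cancel₀ (pow_ne_zero 4 hcne)
  linear_combination
    (2 * b ^ 2 * δ ^ 2 + 2 * b ^ 4 * δ - 2 * b ^ 6 - b ^ 6 * ρ - 2 * a ^ 2 * δ ^ 2
      - 4 * a ^ 2 * b ^ 2 * δ + 6 * a ^ 2 * b ^ 4 + 3 * a ^ 2 * b ^ 4 * ρ + 2 * a ^ 4 * δ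
      - 8 * a ^ 4 * b ^ 2 - 3 * a ^ 4 * b ^ 2 * ρ + 4 * a ^ 6 + a ^ 6 * ρ) * hρc
    + (-4 * b ^ 2 * δ ^ 2 + 4 * b ^ 6 + 4 * a ^ 2 * δ ^ 2 + 8 * a ^ 2 * b ^ 2 * δ
      - 12 * a ^ 2 * b ^ 4 - 8 * a ^ 4 * δ + 8 * a ^ 4 * b ^ 2) * hE
    + (2 * b ^ 8 + 2 * b ^ 8 * ρ - 6 * a ^ 2 * b ^ 6 - 6 * a ^ 2 * b ^ 6 * ρ
      + 6 * a ^ 4 * b ^ 4 + 6 * a ^ 4 * b ^ 4 * ρ - 2 * a ^ 6 * b ^ 2 - 2 * a ^ 6 * b ^ 2 * ρ) * hu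
end

section
/- Let rw' = ((d + R)/(2R))·√((3R − d)(4R² − Rd − d²)/d). Then the power of the point P₀ with respect to the circle of center (−R, 0) and radius rw' equals its power with respect to the incircle (center (d, 0), radius r): ‖P₀ − (−R, 0)‖² − rw'² = ‖P₀ − (d, 0)‖² − r², and this common value equals (R² − d²)²(9R² − d²)/(4R²d²). (This corrects the equal-power circle proposed in Weaver's Theorem III: the antiorthic axis x = (3R² − d²)/(2d) is the radical axis of this circle and the incircle.) -/
/-- correction of Weaver's Theorem III: with the circumcenter at the
origin, incircle of center `(d,0)` and radius `r = (R²−d²)/(2R)`, and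
`P₀ = ((3R²−d²)/(2d), 0)` on the antiorthic axis, the circle of center `(−R, 0)` and
radius `rw' = ((d+R)/(2R))·√((3R−d)(4R²−Rd−d²)/d)` has the same power at `P₀` as the
incircle, the common value being `(R²−d²)²(9R²−d²)/(4R²d²)`. -/
theorem weaver_corrected_equal_power_circle (R d r rw' : ℝ) (P₀ : ℝ × ℝ)
    (hd : 0 < d) (hdR : d < R)
    (hr : r = (R ^ 2 - d ^ 2) / (2 * R))
    (hrw : rw' = ((d + R) / (2 * R)) *
      Real.sqrt ((3 * R - d) * (4 * R ^ 2 - R * d - d ^ 2) / d))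
    (hP₀ : P₀ = ((3 * R ^ 2 - d ^ 2) / (2 * d), 0)) :
    (P₀.1 - (-R)) ^ 2 + (P₀.2 - 0) ^ 2 - rw' ^ 2
      = (P₀.1 - d) ^ 2 + (P₀.2 - 0) ^ 2 - r ^ 2 ∧
    (P₀.1 - d) ^ 2 + (P₀.2 - 0) ^ 2 - r ^ 2
      = (R ^ 2 - d ^ 2) ^ 2 * (9 * R ^ 2 - d ^ 2) / (4 * R ^ 2 * d ^ 2) := by
  have hR : 0 < R := hd.trans hdR
  have harg : 0 ≤ (3 * R - d) * (4 * R ^ 2 - R * d - d ^ 2) / d := by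
    apply div_nonneg _ hd.le
    apply mul_nonneg <;> nlinarith
  have hsq : rw' ^ 2 = ((d + R) / (2 * R)) ^ 2 *
      ((3 * R - d) * (4 * R ^ 2 - R * d - d ^ 2) / d) := by
    rw [hrw, mul_pow, Real.sq_sqrt harg]
  constructor
  · subst hP₀ hr
    rw [hsq]
    field_simp
    ring
  · subst hP₀ hr
    field_simp
    ring
end

section
/- Let rw'' = √((3R − d)(d + R)R/d). Then the following three powers of the point P₀ coincide: its power with respect to the circumcircle (center (0, 0), radius R), its power with respect to the circle Cₑ of center (−d, 0) and radius 2R (the circular locus of the excenters, centered at X₄₀), and its power with respect to the circle of center (−R, 0) and radius rw''; moreover the common value equals Rr(4R + r)/(R − 2r). Explicitly: ‖P₀‖² − R² = ‖P₀ − (−d, 0)‖² − 4R² = ‖P₀ − (−R, 0)‖² − rw''² = Rr(4R + r)/(R − 2r). -/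
/-- with the circumcenter at the origin and
`P₀ = ((3R²−d²)/(2d), 0)`, the powers of `P₀` with respect to
the circumcircle (center `(0,0)`, radius `R`), the excentral-locus circle `Cₑ`
(center `(−d,0)`, radius `2R`), and the circle of center `(−R,0)` and radius
`rw'' = √((3R−d)(d+R)R/d)` all coincide and equal `Rr(4R+r)/(R−2r)`. -/
theorem weaver_equal_power_circles (R d r rw'' : ℝ) (P₀ : ℝ × ℝ)
    (hd : 0 < d) (hdR : d < R)
    (hr : r = (R ^ 2 - d ^ 2) / (2 * R))
    (hrw : rw'' = Real.sqrt ((3 * R - d) * (d + R) * R / d))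
    (hP₀ : P₀ = ((3 * R ^ 2 - d ^ 2) / (2 * d), 0)) :
    (P₀.1 - 0) ^ 2 + (P₀.2 - 0) ^ 2 - R ^ 2
      = R * r * (4 * R + r) / (R - 2 * r) ∧
    (P₀.1 - (-d)) ^ 2 + (P₀.2 - 0) ^ 2 - (2 * R) ^ 2
      = R * r * (4 * R + r) / (R - 2 * r) ∧
    (P₀.1 - (-R)) ^ 2 + (P₀.2 - 0) ^ 2 - rw'' ^ 2
      = R * r * (4 * R + r) / (R - 2 * r) := by
  have hR : (0:ℝ) < R := hd.trans hdR
  have hrw2 : rw'' ^ 2 = (3 * R - d) * (d + R) * R / d := by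
    rw [hrw, Real.sq_sqrt]
    have : 0 < 3 * R - d := by linarith
    positivity
  have hden : R - 2 * r = d ^ 2 / R := by
    rw [hr]; field_simp; ring
  subst hP₀ hr
  rw [hden]
  refine ⟨?_, ?_, ?_⟩ <;> simp only [hrw2] <;> field_simp <;> ring
end

section
/- If in addition d > r (equivalently d > (√2 − 1)R), then the poristic family contains an obtuse triangle: there exist a real t and distinct indices i, j, k ∈ {1, 2, 3} such that the angle of the triangle P₁(t)P₂(t)P₃(t) at the vertex Pᵢ(t) is obtuse, i.e. the inner product (Pⱼ(t) − Pᵢ(t)) · (Pₖ(t) − Pᵢ(t)) < 0. -/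
noncomputable section

/-- if `d > r`, the poristic family contains an obtuse triangle. -/
theorem poristic_contains_obtuse (R d : ℝ) (hd : 0 < d) (hdR : d < R)
    (hdr : rIn R d < d) :
    ∃ t : ℝ, ∃ i j k : Fin 3, i ≠ j ∧ i ≠ k ∧ j ≠ k ∧
      ((Pv R d t j).1 - (Pv R d t i).1) * ((Pv R d t k).1 - (Pv R d t i).1)
        + ((Pv R d t j).2 - (Pv R d t i).2) * ((Pv R d t k).2 - (Pv R d t i).2)
        < 0 := by
  refine ⟨Real.pi, 2, 0, 1, by decide, by decide, by decide, ?_⟩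
  have hR : 0 < R := hd.trans hdR
  have hr : 0 < rIn R d := by
    unfold rIn
    have : 0 < R ^ 2 - d ^ 2 := by nlinarith
    positivity
  have hrad : 0 ≤ R ^ 2 - (d * Real.cos Real.pi + rIn R d) ^ 2 := by
    rw [Real.cos_pi]
    nlinarith
  have hom : om R d Real.pi ^ 2 = R ^ 2 - (d * Real.cos Real.pi + rIn R d) ^ 2 :=
    Real.sq_sqrt hrad
  have hden : R ^ 2 - 2 * d * R * Real.cos Real.pi + d ^ 2 = (R + d) ^ 2 := by
    rw [Real.cos_pi]; ring
  simp only [Pv, Matrix.cons_val_zero, Matrix.cons_val_one, Matrix.head_cons,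
    Matrix.cons_val_two, Matrix.tail_cons, Real.cos_pi, Real.sin_pi] at *
  have hP3 : R * (2 * d * R - (R ^ 2 + d ^ 2) * (-1)) / (R ^ 2 - 2 * d * R * (-1) + d ^ 2) = R := by
    rw [show R ^ 2 - 2 * d * R * (-1) + d ^ 2 = (R + d) ^ 2 by ring]
    rw [div_eq_iff (by positivity)]
    ring
  rw [hP3]
  ring_nf
  nlinarith [hom, hr, hdr]
end
end
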